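/- For c > 0 and beta > 0, the integral over x in (0, infinity) of x^(1/2) * exp(-c/(2x) - beta^2 * x / 2) dx equals sqrt(2*pi) * beta^(-3) * (1 + beta * sqrt(c)) * exp(-beta * sqrt(c)). -/

import Mathlib

/-!
Substituting `x = t ^ 2` and writing `a = √c`, the exponent becomes `-a β - (β t - a / t) ^ 2 / 2`,
so it remains to integrate `t ^ 2 * exp (-(β t - a / t) ^ 2 / 2)` over `t > 0`. The inversion
`t ↦ a / (β t)` changes `β t - a / t` only in sign, so this integral is half the integral of
`(t ^ 2 + k ^ 3 / t ^ 4) * exp (-(β t - a / t) ^ 2 / 2)` with `k = a / β`. That weight factors as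
`(1 + k / t ^ 2) * ((t - k / t) ^ 2 + k)`, i.e. the Jacobian of `u = β t - a / t` times a polynomial
in `u`; since `u` maps `(0, ∞)` bijectively onto `ℝ` (Cauchy–Schlömilch), everything reduces to
the Gaussian integrals `∫ exp (-u ^ 2 / 2) = ∫ u ^ 2 exp (-u ^ 2 / 2) = √(2π)`.
-/

open MeasureTheory Real Set

section ChangeOfVariables

variable {E : Type*} [NormedAddCommGroup E] [NormedSpace ℝ E] {a β : ℝ}

lemma hasDerivAt_mul_sub_div (β a : ℝ) {t : ℝ} (ht : t ≠ 0) :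
    HasDerivAt (fun t => β * t - a / t) (β + a / t ^ 2) t := by
  have := ((hasDerivAt_id' t).const_mul β).fun_sub ((hasDerivAt_inv ht).const_mul a)
  simpa only [mul_one, mul_neg, sub_neg_eq_add, ← div_eq_mul_inv] using this

lemma strictMonoOn_mul_sub_div (ha : 0 ≤ a) (hβ : 0 < β) :
    StrictMonoOn (fun t => β * t - a / t) (Ioi 0) := by
  intro s hs t _ hst
  have : a / t ≤ a / s := div_le_div_of_nonneg_left ha hs hst.le
  dsimp only
  nlinarith

lemma image_mul_sub_div_Ioi (ha : 0 < a) (hβ : 0 < β) :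
    (fun t => β * t - a / t) '' Ioi 0 = univ := by
  refine eq_univ_of_forall fun u => ?_
  -- the positive root of `β t ^ 2 - u t - a = 0`
  set s := √(u ^ 2 + 4 * a * β)
  have hs : s ^ 2 = u ^ 2 + 4 * a * β := sq_sqrt (by positivity)
  have hus : 0 < u + s := by nlinarith [sqrt_nonneg (u ^ 2 + 4 * a * β), mul_pos ha hβ]
  refine ⟨(u + s) / (2 * β), div_pos hus (by positivity), ?_⟩
  field_simp
  linear_combination hs

theorem integral_Ioi_smul_comp_mul_sub_div (ha : 0 < a) (hβ : 0 < β) (g : ℝ → E) :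
    ∫ t in Ioi 0, (β + a / t ^ 2) • g (β * t - a / t) = ∫ u, g u := by
  have := integral_image_eq_integral_abs_deriv_smul measurableSet_Ioi
    (fun t ht => (hasDerivAt_mul_sub_div β a (ne_of_gt ht)).hasDerivWithinAt)
    (strictMonoOn_mul_sub_div ha.le hβ).injOn g
  rw [image_mul_sub_div_Ioi ha hβ, setIntegral_univ] at this
  rw [this]
  refine setIntegral_congr_fun measurableSet_Ioi fun t (ht : 0 < t) => ?_
  rw [abs_of_pos (by positivity)]

theorem integrableOn_Ioi_smul_comp_mul_sub_div_iff (ha : 0 < a) (hβ : 0 < β) (g : ℝ → E) :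
    IntegrableOn (fun t => (β + a / t ^ 2) • g (β * t - a / t)) (Ioi 0) ↔ Integrable g := by
  have := integrableOn_image_iff_integrableOn_abs_deriv_smul measurableSet_Ioi
    (fun t ht => (hasDerivAt_mul_sub_div β a (ne_of_gt ht)).hasDerivWithinAt)
    (strictMonoOn_mul_sub_div ha.le hβ).injOn g
  rw [image_mul_sub_div_Ioi ha hβ, integrableOn_univ] at this
  rw [this]
  refine integrableOn_congr_fun (fun t (ht : 0 < t) => ?_) measurableSet_Ioi
  rw [abs_of_pos (by positivity)]

theorem integral_Ioi_smul_comp_div {k : ℝ} (hk : 0 < k) (g : ℝ → E) :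
    ∫ t in Ioi 0, (k / t ^ 2) • g (k / t) = ∫ t in Ioi 0, g t := by
  have hinv := integral_comp_rpow_Ioi (fun y => g (k * y)) (p := -1) (by norm_num)
  rw [integral_comp_mul_left_Ioi g 0 hk, mul_zero] at hinv
  rw [← smul_inv_smul₀ hk.ne' (∫ t in Ioi 0, g t), ← hinv, ← integral_smul]
  refine setIntegral_congr_fun measurableSet_Ioi fun t (ht : 0 < t) => ?_
  simp only [smul_smul, rpow_neg_one]
  rw [show (-1 - 1 : ℝ) = -(2 : ℕ) by norm_num, rpow_neg ht.le, rpow_natCast, abs_neg, abs_one,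
    one_mul, div_eq_mul_inv, div_eq_mul_inv]

theorem integral_Ioi_smul_comp_sq (g : ℝ → E) :
    ∫ t in Ioi 0, (2 * t) • g (t ^ 2) = ∫ x in Ioi 0, g x := by
  rw [← integral_comp_rpow_Ioi_of_pos (g := g) two_pos]
  refine setIntegral_congr_fun measurableSet_Ioi fun t (ht : 0 < t) => ?_
  norm_num

end ChangeOfVariables

lemma integral_exp_neg_sq_div_two : ∫ u, exp (-u ^ 2 / 2) = √(2 * π) := by
  simpa [neg_div, div_eq_inv_mul, ← div_eq_mul_inv] using integral_gaussian (1 / 2)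

lemma integrable_exp_neg_sq_div_two : Integrable fun u : ℝ => exp (-u ^ 2 / 2) := by
  simpa [neg_div, div_eq_inv_mul, ← div_eq_mul_inv] using
    integrable_exp_neg_mul_sq (b := 1 / 2) (by norm_num)

lemma integrable_sq_mul_exp_neg_sq_div_two :
    Integrable fun u : ℝ => u ^ 2 * exp (-u ^ 2 / 2) := by
  simpa [neg_div, div_eq_inv_mul, ← div_eq_mul_inv] using
    integrable_rpow_mul_exp_neg_mul_sq (b := 1 / 2) (by norm_num) (s := 2) (by norm_num)

open ProbabilityTheory in
lemma integral_sq_mul_exp_neg_sq_div_two : ∫ u, u ^ 2 * exp (-u ^ 2 / 2) = √(2 * π) := by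
  have h := variance_fun_id_gaussianReal (μ := 0) (v := 1)
  rw [variance_eq_integral measurable_id'.aemeasurable,
    integral_gaussianReal_eq_integral_smul one_ne_zero] at h
  simp only [integral_id_gaussianReal, sub_zero, gaussianPDFReal_def, NNReal.coe_one, mul_one,
    smul_eq_mul, mul_assoc, integral_const_mul] at h
  have h2π : √(2 * π) ≠ 0 := by positivity
  rw [← mul_right_inj' (inv_ne_zero h2π), inv_mul_cancel₀ h2π, ← h]
  congr 2 with u
  ring

lemma mul_div_div_sub_div_div {a β : ℝ} (ha : a ≠ 0) (hβ : β ≠ 0) {t : ℝ} (ht : t ≠ 0) :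
    β * (a / β / t) - a / (a / β / t) = -(β * t - a / t) := by
  field_simp
  ring

theorem integral_Ioi_sq_mul_exp_neg_mul_sub_div_sq {a β : ℝ} (ha : 0 < a) (hβ : 0 < β) :
    ∫ t in Ioi 0, t ^ 2 * exp (-(β * t - a / t) ^ 2 / 2)
      = √(2 * π) * (1 + a * β) / (2 * β ^ 3) := by
  set g : ℝ → ℝ := fun t => t ^ 2 * exp (-(β * t - a / t) ^ 2 / 2) with hg
  set k := a / β with hk
  set h : ℝ → ℝ := fun u => (u ^ 2 * exp (-u ^ 2 / 2) + a * β * exp (-u ^ 2 / 2)) / β ^ 3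
  have hsplit : ∀ t ∈ Ioi (0 : ℝ),
      (β + a / t ^ 2) • h (β * t - a / t) = g t + (k / t ^ 2) • g (k / t) := by
    intro t (ht : 0 < t)
    simp only [hg, h, smul_eq_mul, hk, mul_div_div_sub_div_div ha.ne' hβ.ne' ht.ne', neg_sq]
    field_simp
    ring
  have hF : IntegrableOn (fun t => g t + (k / t ^ 2) • g (k / t)) (Ioi 0) :=
    ((integrableOn_Ioi_smul_comp_mul_sub_div_iff ha hβ h).2
      ((integrable_sq_mul_exp_neg_sq_div_two.add
        (integrable_exp_neg_sq_div_two.const_mul _)).div_const _)).congr_fun hsplit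
      measurableSet_Ioi
  have hg_int : IntegrableOn g (Ioi 0) := by
    refine hF.mono' (by fun_prop) ((ae_restrict_iff' measurableSet_Ioi).2 (ae_of_all _ ?_))
    intro t (ht : 0 < t)
    rw [norm_of_nonneg (by positivity)]
    have : 0 ≤ (k / t ^ 2) • g (k / t) := by positivity
    linarith
  have hg_inv_int : IntegrableOn (fun t => (k / t ^ 2) • g (k / t)) (Ioi 0) :=
    (hF.sub hg_int).congr_fun (fun t _ => add_sub_cancel_left _ _) measurableSet_Ioi
  have hh : ∫ u, h u = √(2 * π) * (1 + a * β) / β ^ 3 := by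
    simp only [h, integral_div]
    rw [integral_add integrable_sq_mul_exp_neg_sq_div_two
      (integrable_exp_neg_sq_div_two.const_mul _), integral_const_mul,
      integral_sq_mul_exp_neg_sq_div_two, integral_exp_neg_sq_div_two]
    ring
  have : 2 * ∫ t in Ioi 0, g t = √(2 * π) * (1 + a * β) / β ^ 3 := by
    calc 2 * ∫ t in Ioi 0, g t
        = (∫ t in Ioi 0, g t) + ∫ t in Ioi 0, (k / t ^ 2) • g (k / t) := by
          rw [integral_Ioi_smul_comp_div (by positivity)]; ring
      _ = ∫ t in Ioi 0, (β + a / t ^ 2) • h (β * t - a / t) := by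
          rw [← integral_add hg_int hg_inv_int]
          exact (setIntegral_congr_fun measurableSet_Ioi hsplit).symm
      _ = _ := by rw [integral_Ioi_smul_comp_mul_sub_div ha hβ, hh]
  field_simp at this ⊢
  linarith

theorem bessel_integral_three_halves (c β : ℝ) (hc : 0 < c) (hβ : 0 < β) :
    ∫ x in Set.Ioi (0 : ℝ), Real.sqrt x * Real.exp (-c / (2 * x) - β ^ 2 * x / 2)
      = Real.sqrt (2 * Real.pi) / β ^ 3 *
          ((1 + β * Real.sqrt c) * Real.exp (-(β * Real.sqrt c))) := by
  set a := √c
  have ha : 0 < a := sqrt_pos.2 hc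
  have hc_eq : c = a ^ 2 := (sq_sqrt hc.le).symm
  have hsubst : ∀ t ∈ Ioi (0 : ℝ),
      (2 * t) • (√(t ^ 2) * exp (-c / (2 * t ^ 2) - β ^ 2 * t ^ 2 / 2))
        = 2 * exp (-(β * a)) * (t ^ 2 * exp (-(β * t - a / t) ^ 2 / 2)) := by
    intro t (ht : 0 < t)
    have hexponent :
        -c / (2 * t ^ 2) - β ^ 2 * t ^ 2 / 2 = -(β * a) + -(β * t - a / t) ^ 2 / 2 := by
      rw [hc_eq]
      field_simp
      ring
    rw [sqrt_sq ht.le, hexponent, exp_add, smul_eq_mul]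
    ring
  rw [← integral_Ioi_smul_comp_sq, setIntegral_congr_fun measurableSet_Ioi hsubst,
    integral_const_mul, integral_Ioi_sq_mul_exp_neg_mul_sub_div_sq ha hβ]
  field_simp
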